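/- arXiv:1609.07065 — 5 statements merged into one kernel-verified Lean document; each statement's English description precedes it below -/
import Mathlib

section
/- Let →₁ ⊆ →₂ be binary relations on a set O. The following four statements are equivalent: (1) the composed relation →₂* ∘ →₁ ∘ →₂* is terminating; (2) the relation →₁ ∘ →₂* is terminating; (3) the relation →₂* ∘ →₁ is terminating; (4) →₁ is terminating relative to →₂. -/
/-!
An infinite `→₁ ∘ →₂*` sequence is flattened into an infinite `→₂`-sequence by walking each
`→₂*` segment step by step. To do this by dependent choice, the state records how many `→₂`-steps
remain to the next point of the given sequence: every step either is a `→₁`-step or decreases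
that counter, so infinitely many steps are `→₁`-steps. Conversely, the `→₁`-steps of an infinite
`→₂`-sequence cut it into an infinite `→₁ ∘ →₂*` sequence. The three terminating compositions
agree because `a ∘ b` terminates iff `b ∘ a` does and `→₂* ∘ →₂* = →₂*`.
-/

namespace CycleRewriting

/-- A binary relation is terminating if there is no infinite reduction sequence. -/
def Terminating {beta : Type*} (r : beta → beta → Prop) : Prop :=
  ¬ ∃ f : ℕ → beta, ∀ n : ℕ, r (f n) (f (n + 1))

/-- `r₁` is terminating relative to `r₂` iff every infinite `r₂`-sequence contains only
finitely many `r₁`-steps. -/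
def RelTerminating {beta : Type*} (r₁ r₂ : beta → beta → Prop) : Prop :=
  ¬ ∃ f : ℕ → beta, (∀ n : ℕ, r₂ (f n) (f (n + 1))) ∧
      {n : ℕ | r₁ (f n) (f (n + 1))}.Infinite

/-- The string rewrite relation of an SRS `R`. -/
def Step {α : Type*} (R : Set (List α × List α)) (x y : List α) : Prop :=
  ∃ u v l r, (l, r) ∈ R ∧ x = u ++ l ++ v ∧ y = u ++ r ++ v

/-- The prefix rewrite relation of an SRS `R`. -/
def PrefixStep {α : Type*} (R : Set (List α × List α)) (x y : List α) : Prop :=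
  ∃ l r w, (l, r) ∈ R ∧ x = l ++ w ∧ y = r ++ w

/-- The rotation equivalence `u ~ v` iff `u = w₁w₂` and `v = w₂w₁`. -/
def Sim {α : Type*} (u v : List α) : Prop :=
  ∃ w₁ w₂, u = w₁ ++ w₂ ∧ v = w₂ ++ w₁

/-- The cycle rewrite relation of an SRS `R` (on representatives of `Sim`-classes):
`[u] ∘→_R [v]` iff there are a rule `(l, r) ∈ R` and `w` with `l ++ w ∈ [u]` and
`r ++ w ∈ [v]`. -/
def CycleStep {α : Type*} (R : Set (List α × List α)) (x y : List α) : Prop :=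
  ∃ l r w, (l, r) ∈ R ∧ Sim (l ++ w) x ∧ Sim (r ++ w) y

/-- The shift relation `↷`: move the first symbol of a string to its end. -/
def Rot {α : Type*} (u v : List α) : Prop :=
  ∃ a w, u = a :: w ∧ v = w ++ [a]

/-- `k`-fold composition of a relation. -/
def RelPow {beta : Type*} (r : beta → beta → Prop) : ℕ → beta → beta → Prop
  | 0 => Eq
  | n + 1 => Relation.Comp r (RelPow r n)

/-- `lenSRS R` is the maximal length of a left-hand side of a rule of `R`. -/
noncomputable def lenSRS {α : Type*} (R : Set (List α × List α)) : ℕ :=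
  sSup ((fun p : List α × List α => p.1.length) '' R)

open Relation

section Compositions

variable {β : Type*}

theorem Terminating.comp_swap {a b : β → β → Prop} (h : Terminating (Comp a b)) :
    Terminating (Comp b a) := by
  rintro ⟨f, hf⟩
  choose y hfy hyf using hf
  exact h ⟨y, fun n => ⟨f (n + 1), hyf n, hfy (n + 1)⟩⟩

theorem terminating_comp_comm {a b : β → β → Prop} :
    Terminating (Comp a b) ↔ Terminating (Comp b a) :=
  ⟨Terminating.comp_swap, Terminating.comp_swap⟩

theorem reflTransGen_comp_reflTransGen (r : β → β → Prop) :
    Comp (ReflTransGen r) (ReflTransGen r) = ReflTransGen r := by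
  ext a c
  exact ⟨fun ⟨_, hab, hbc⟩ => hab.trans hbc, fun h => ⟨c, h, .refl⟩⟩

theorem exists_relPow_of_reflTransGen {r : β → β → Prop} {a b : β} (h : ReflTransGen r a b) :
    ∃ k, RelPow r k a b := by
  induction h using ReflTransGen.head_induction_on with
  | refl => exact ⟨0, rfl⟩
  | head hab _ ih =>
    obtain ⟨k, hk⟩ := ih
    exact ⟨k + 1, _, hab, hk⟩

end Compositions

theorem exists_seq_of_forall_exists {α : Type*} {p : α → Prop} {T : α → α → Prop} {a : α}
    (ha : p a) (h : ∀ a, p a → ∃ b, p b ∧ T a b) : ∃ g : ℕ → α, ∀ n, T (g n) (g (n + 1)) := by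
  choose next hnext hT using h
  let g : ℕ → {a // p a} := fun n => n.rec ⟨a, ha⟩ fun _ x => ⟨next x x.2, hnext x x.2⟩
  exact ⟨fun n => (g n).1, fun n => hT _ _⟩

theorem Nat.infinite_setOf_of_forall_or_lt {P : ℕ → Prop} {k : ℕ → ℕ}
    (h : ∀ n, P n ∨ k (n + 1) < k n) : {n | P n}.Infinite := by
  by_contra hfin
  obtain ⟨N, hN⟩ := (Set.not_infinite.mp hfin).bddAbove
  obtain ⟨n, hn⟩ := WellFounded.not_rel_apply_succ (r := (· < ·)) fun n => k (N + 1 + n)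
  exact hn ((h (N + 1 + n)).resolve_left fun hP => by have := hN hP; omega)

section Relative

variable {O : Type*} {r₁ r₂ : O → O → Prop}

theorem relTerminating_of_terminating_comp (h : Terminating (Comp r₁ (ReflTransGen r₂))) :
    RelTerminating r₁ r₂ := by
  rintro ⟨f, hf, hinf⟩
  let e := Nat.nth fun n => r₁ (f n) (f (n + 1))
  have hgap (k : ℕ) : ReflTransGen r₂ (f (e k + 1)) (f (e (k + 1))) := by
    refine (reflTransGen_of_succ_of_le (fun i j => r₂ (f i) (f j)) (fun i _ => ?_) ?_).lift f
      fun _ _ hij => hij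
    · simpa using hf i
    · exact Nat.nth_strictMono hinf k.lt_succ_self
  exact h ⟨fun k => f (e k), fun k => ⟨_, Nat.nth_mem_of_infinite hinf k, hgap k⟩⟩

theorem terminating_comp_of_relTerminating (hsub : ∀ x y, r₁ x y → r₂ x y)
    (h : RelTerminating r₁ r₂) : Terminating (Comp r₁ (ReflTransGen r₂)) := by
  rintro ⟨f, hf⟩
  let Reachable (s : O × ℕ) : Prop := ∃ n, RelPow r₂ s.2 s.1 (f n)
  let Advance (s t : O × ℕ) : Prop := r₂ s.1 t.1 ∧ (r₁ s.1 t.1 ∨ t.2 < s.2)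
  have hstep : ∀ s, Reachable s → ∃ t, Reachable t ∧ Advance s t := by
    rintro ⟨x, _ | k⟩ ⟨n, hn⟩
    · obtain ⟨y, hxy, hy⟩ := hf n
      obtain ⟨j, hj⟩ := exists_relPow_of_reflTransGen hy
      cases hn
      exact ⟨(y, j), ⟨n + 1, hj⟩, hsub _ _ hxy, .inl hxy⟩
    · obtain ⟨x', hxx', hx'⟩ := hn
      exact ⟨(x', k), ⟨n, hx'⟩, hxx', .inr k.lt_succ_self⟩
  obtain ⟨g, hg⟩ := exists_seq_of_forall_exists (a := (f 0, 0)) ⟨0, rfl⟩ hstep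
  exact h ⟨fun n => (g n).1, fun n => (hg n).1,
    Nat.infinite_setOf_of_forall_or_lt (k := fun n => (g n).2) fun n => (hg n).2⟩

theorem relTerminating_iff_terminating_comp (hsub : ∀ x y, r₁ x y → r₂ x y) :
    RelTerminating r₁ r₂ ↔ Terminating (Comp r₁ (ReflTransGen r₂)) :=
  ⟨terminating_comp_of_relTerminating hsub, relTerminating_of_terminating_comp⟩

end Relative

/-- characterizations of relative termination. -/
theorem relative_termination_characterizations {O : Type*} (r₁ r₂ : O → O → Prop)
    (hsub : ∀ x y, r₁ x y → r₂ x y) :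
    List.TFAE
      [Terminating (Relation.Comp (Relation.ReflTransGen r₂)
          (Relation.Comp r₁ (Relation.ReflTransGen r₂))),
       Terminating (Relation.Comp r₁ (Relation.ReflTransGen r₂)),
       Terminating (Relation.Comp (Relation.ReflTransGen r₂) r₁),
       RelTerminating r₁ r₂] := by
  tfae_have 1 ↔ 2 := by
    rw [terminating_comp_comm, comp_assoc, reflTransGen_comp_reflTransGen]
  tfae_have 2 ↔ 3 := terminating_comp_comm
  tfae_have 4 ↔ 2 := relTerminating_iff_terminating_comp hsub
  tfae_finish

end CycleRewriting
end

section
/- Let S ⊆ R be well-typed SRSs over a typed signature Σ. Then S is string terminating relative to R (i.e., →_S is terminating relative to →_R) if and only if S is string terminating relative to R in the typed setting, i.e., every infinite →_R-reduction consisting of well-typed strings contains only finitely many →_S-steps. -/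
namespace CycleRewriting

/-- A string is well-typed iff `source aᵢ = target aᵢ₊₁` for all consecutive symbols. -/
def WTStr {α T : Type*} (source target : α → T) (w : List α) : Prop :=
  List.Chain' (fun a b => source a = target b) w

/-- The source of a string: the source of its last symbol. -/
def strSource {α T : Type*} (source : α → T) (w : List α) : Option T :=
  w.getLast?.map source

/-- The target of a string: the target of its first symbol. -/
def strTarget {α T : Type*} (target : α → T) (w : List α) : Option T :=
  w.head?.map target

/-- An SRS is well-typed if all left-hand sides are nonempty and for every rule `ℓ → r`:
either `r = ε` and `source ℓ = target ℓ`, or `r ≠ ε`, `source ℓ = source r` and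
`target ℓ = target r` (with both sides well-typed strings). -/
def WTSRS {α T : Type*} (source target : α → T) (R : Set (List α × List α)) : Prop :=
  ∀ p ∈ R, p.1 ≠ [] ∧ WTStr source target p.1 ∧ WTStr source target p.2 ∧
    (p.2 = [] → strSource source p.1 = strTarget target p.1) ∧
    (p.2 ≠ [] → strSource source p.1 = strSource source p.2 ∧
                strTarget target p.1 = strTarget target p.2)

/-!
Cut every string into its maximal well-typed blocks. For a well-typed rule `ℓ → r`, the redex `ℓ`
lies inside one block, and the contractum `r` (or, for `r = ε`, the junction it leaves) has the
same boundary types; so a step either rewrites inside a single block and leaves all other blocks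
unchanged, or erases a whole block and lowers the number of blocks. Along an infinite reduction
the number of blocks is therefore eventually constant, after which every step acts on one block.
By pigeonhole one block position receives infinitely many `S`-steps, and the sequence of blocks
at that position, with repetitions removed, is an infinite well-typed reduction.
-/

section SplitBy

variable {α : Type*} (r : α → α → Bool)

def Breaks (B C : List α) : Prop :=
  ∀ x ∈ B.getLast?, ∀ y ∈ C.head?, r x y = false

variable {r}

theorem splitBy_eq_iff_breaks {w : List α} {L : List (List α)} :
    w.splitBy r = L ↔ w = L.flatten ∧ [] ∉ L ∧ (∀ B ∈ L, B.IsChain (fun x y => r x y)) ∧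
      L.IsChain (Breaks r) := by
  rw [List.splitBy_eq_iff]
  refine and_congr_right fun _ => and_congr_right fun hL => and_congr_right fun _ =>
    List.IsChain.iff_of_mem_imp fun B C hB hC => ?_
  have hB : B ≠ [] := fun h => hL (h ▸ hB)
  have hC : C ≠ [] := fun h => hL (h ▸ hC)
  simp [Breaks, List.getLast?_eq_some_getLast hB, List.head?_eq_some_head hC, hB, hC]

theorem splitBy_cons_of_not_rel {a : α} {w : List α} (h : ∀ y ∈ w.head?, r a y = false) :
    (a :: w).splitBy r = [a] :: w.splitBy r := by
  rw [← List.singleton_append, List.splitBy_append (by simpa using h),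
    List.splitBy_of_isChain (List.cons_ne_nil a []) (List.isChain_singleton a)]
  rfl

theorem splitBy_cons_of_rel {a : α} {w : List α} (hw : w ≠ []) (h : r a (w.head hw)) :
    ∃ C M, w.splitBy r = C :: M ∧ (a :: w).splitBy r = (a :: C) :: M := by
  obtain ⟨C, M, hCM⟩ := List.exists_cons_of_ne_nil (List.splitBy_ne_nil.2 hw)
  obtain ⟨hflat, hnil, hchain, hbreaks⟩ := splitBy_eq_iff_breaks.1 hCM
  have hC : C ≠ [] := fun h => hnil (h ▸ List.mem_cons_self)
  refine ⟨C, M, hCM, splitBy_eq_iff_breaks.2 ⟨by simp [hflat], ?_, ?_, ?_⟩⟩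
  · simpa using fun h => hnil (List.mem_cons_of_mem _ h)
  · intro B hB
    rcases List.mem_cons.1 hB with rfl | hB
    · refine List.isChain_cons.2 ⟨fun y hy => ?_, hchain C List.mem_cons_self⟩
      have : w.head? = C.head? := by simp [hflat, List.head?_append, List.head?_eq_some_head hC]
      rw [← this, List.head?_eq_some_head hw, Option.mem_some_iff] at hy
      exact hy ▸ h
    · exact hchain B (List.mem_cons_of_mem _ hB)
  · refine List.isChain_cons.2 ⟨fun D hD x hx => ?_, (List.isChain_cons.1 hbreaks).2⟩
    rw [List.getLast?_cons, List.getLast?_eq_some_getLast hC, Option.getD_some] at hx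
    exact (List.isChain_cons.1 hbreaks).1 D hD x (List.getLast?_eq_some_getLast hC ▸ hx)

theorem splitBy_cons_eq_or (a : α) (w : List α) :
    (a :: w).splitBy r = [a] :: w.splitBy r ∨
      ∃ C M, w.splitBy r = C :: M ∧ (a :: w).splitBy r = (a :: C) :: M := by
  by_cases h : ∀ y ∈ w.head?, r a y = false
  · exact .inl (splitBy_cons_of_not_rel h)
  · obtain ⟨y, hy, hay⟩ : ∃ y ∈ w.head?, r a y = true := by simpa using h
    have hw : w ≠ [] := by rintro rfl; simp at hy
    rw [List.head?_eq_some_head hw, Option.mem_some_iff] at hy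
    exact .inr (splitBy_cons_of_rel hw (hy ▸ hay))

theorem length_splitBy_cons_le (a : α) (w : List α) :
    ((a :: w).splitBy r).length ≤ (w.splitBy r).length + 1 := by
  rcases splitBy_cons_eq_or (r := r) a w with h | ⟨C, M, hw, h⟩ <;> simp [*]

theorem length_splitBy_append_le {B : List α} (hB : B.IsChain (fun x y => r x y)) (w : List α) :
    ((B ++ w).splitBy r).length ≤ (w.splitBy r).length + 1 := by
  induction B with
  | nil => simp
  | cons a B ih =>
    rcases B with _ | ⟨b, B⟩
    · exact length_splitBy_cons_le (r := r) a w
    · obtain ⟨hab, hB⟩ := List.isChain_cons_cons.1 hB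
      obtain ⟨C, M, h, h'⟩ := splitBy_cons_of_rel (a := a) (w := b :: (B ++ w)) (by simp) hab
      simpa [h, h'] using ih hB

theorem length_splitBy_flatten_le {L : List (List α)} (hL : ∀ B ∈ L, B.IsChain (fun x y => r x y)) :
    (L.flatten.splitBy r).length ≤ L.length := by
  induction L with
  | nil => simp
  | cons B L ih =>
    rw [List.flatten_cons, List.length_cons]
    exact (length_splitBy_append_le (hL B List.mem_cons_self) _).trans
      (Nat.add_le_add_right (ih fun C hC => hL C (List.mem_cons_of_mem _ hC)) 1)

theorem exists_splitBy_append_of_isChain {m : List α} (hm : m ≠ [])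
    (hc : m.IsChain (fun x y => r x y)) (q : List α) :
    ∃ Y Q, q = Y ++ Q.flatten ∧ (m ++ q).splitBy r = (m ++ Y) :: Q := by
  induction m with
  | nil => exact absurd rfl hm
  | cons a m ih =>
    rcases m with _ | ⟨b, m⟩
    · rcases splitBy_cons_eq_or (r := r) a q with h | ⟨C, M, hq, h⟩
      · exact ⟨[], q.splitBy r, by simp, h⟩
      · exact ⟨C, M, by rw [← List.flatten_splitBy r q, hq]; rfl, h⟩
    · obtain ⟨hab, hc⟩ := List.isChain_cons_cons.1 hc
      obtain ⟨Y, Q, hq, h⟩ := ih (List.cons_ne_nil _ _) hc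
      obtain ⟨C, M, h', h''⟩ := splitBy_cons_of_rel (a := a) (w := (b :: m) ++ q) (by simp) hab
      rw [h, List.cons.injEq] at h'
      exact ⟨Y, Q, hq, by simpa [h'.1, h'.2] using h''⟩

theorem exists_splitBy_append_of_splitBy_eq_cons {w C : List α} {M : List (List α)}
    (hw : w.splitBy r = C :: M) (p : List α) :
    ∃ P X, p = P.flatten ++ X ∧ (p ++ w).splitBy r = P ++ (X ++ C) :: M := by
  induction p with
  | nil => exact ⟨[], [], rfl, hw⟩
  | cons a p ih =>
    obtain ⟨P, X, hp, h⟩ := ih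
    rcases splitBy_cons_eq_or (r := r) a (p ++ w) with h' | ⟨C', M', h', h''⟩
    · exact ⟨[a] :: P, X, by simp [hp], by simp [h', h]⟩
    · rcases P with _ | ⟨D, P⟩
      · simp only [List.nil_append, h, List.cons.injEq] at h'
        exact ⟨[], a :: X, by simp [hp], by simp [h'', ← h'.1, ← h'.2]⟩
      · simp only [List.cons_append, h, List.cons.injEq] at h'
        exact ⟨(a :: D) :: P, X, by simp [hp], by simp [h'', ← h'.1, ← h'.2]⟩

theorem exists_splitBy_eq_of_isChain {m : List α} (hm : m ≠ [])
    (hc : m.IsChain (fun x y => r x y)) (p q : List α) :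
    ∃ P X Y Q, p = P.flatten ++ X ∧ q = Y ++ Q.flatten ∧
      (p ++ m ++ q).splitBy r = P ++ (X ++ m ++ Y) :: Q := by
  obtain ⟨Y, Q, hq, hmq⟩ := exists_splitBy_append_of_isChain hm hc q
  obtain ⟨P, X, hp, h⟩ := exists_splitBy_append_of_splitBy_eq_cons hmq p
  exact ⟨P, X, Y, Q, hp, hq, by simpa using h⟩

theorem splitBy_replace {w B B' : List α} {P Q : List (List α)} (h : w.splitBy r = P ++ B :: Q)
    (hB' : B' ≠ []) (hc : B'.IsChain (fun x y => r x y))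
    (hhead : ∀ A, Breaks r A B → Breaks r A B') (hlast : ∀ C, Breaks r B C → Breaks r B' C) :
    (P.flatten ++ B' ++ Q.flatten).splitBy r = P ++ B' :: Q := by
  obtain ⟨-, hnil, hchain, hbreaks⟩ := splitBy_eq_iff_breaks.1 h
  refine splitBy_eq_iff_breaks.2 ⟨by simp, ?_, ?_, ?_⟩
  · simp only [List.mem_append, List.mem_cons, not_or] at hnil ⊢
    exact ⟨hnil.1, Ne.symm hB', hnil.2.2⟩
  · simp only [List.mem_append, List.mem_cons] at hchain ⊢
    rintro C (hC | rfl | hC)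
    exacts [hchain C (.inl hC), hc, hchain C (.inr (.inr hC))]
  · rw [List.isChain_append, List.isChain_cons] at hbreaks ⊢
    obtain ⟨hP, ⟨hBQ, hQ⟩, hjunction⟩ := hbreaks
    refine ⟨hP, ⟨fun C hC => hlast C (hBQ C hC), hQ⟩, fun A hA C hC => ?_⟩
    rw [List.head?_cons, Option.mem_some_iff] at hC
    exact hC ▸ hhead A (hjunction A hA B rfl)

end SplitBy

section Sequences

variable {β : Type*} {r s : β → β → Prop}

theorem exists_forall_ge_eq_of_antitone {N : ℕ → ℕ} (hN : Antitone N) :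
    ∃ n₀, ∀ n ≥ n₀, N n = N n₀ :=
  ⟨Function.argmin N, fun _ hn => le_antisymm (hN hn) (Function.argmin_le N _)⟩

theorem infinite_preimage_add {s : Set ℕ} (hs : s.Infinite) (n₀ : ℕ) :
    ((n₀ + ·) ⁻¹' s).Infinite := by
  refine Set.Infinite.preimage' ((hs.sdiff (Set.finite_lt_nat n₀)).mono ?_)
  rintro n ⟨hn, hn₀n⟩
  exact ⟨hn, n - n₀, Nat.add_sub_cancel' (not_lt.1 hn₀n)⟩

theorem exists_subseq_of_stuttering (hsr : ∀ a b, s a b → r a b) {g : ℕ → β}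
    (hg : ∀ n, g (n + 1) = g n ∨ r (g n) (g (n + 1))) (hs : {n | s (g n) (g (n + 1))}.Infinite) :
    ∃ e : ℕ → ℕ, (∀ j, r (g (e j)) (g (e (j + 1)))) ∧
      {j | s (g (e j)) (g (e (j + 1)))}.Infinite := by
  set B := {n | r (g n) (g (n + 1))}
  have hB : B.Infinite := hs.mono fun n => hsr _ _
  -- `e` enumerates the genuine `r`-steps; between two of them `g` is constant.
  set e := Nat.nth (· ∈ B)
  have hskip : ∀ j, g (e (j + 1)) = g (e j + 1) := by
    intro j
    have hlt : e j < e (j + 1) := Nat.nth_strictMono hB (Nat.lt_succ_self j)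
    suffices ∀ m, e j + 1 ≤ m → m ≤ e (j + 1) → g m = g (e j + 1) from this _ hlt le_rfl
    intro m hm
    induction m, hm using Nat.le_induction with
    | base => exact fun _ => rfl
    | succ m hm ih =>
      intro hm'
      have hmB : m ∉ B := fun hmB => by
        have : m ≤ e j :=
          Nat.le_nth_of_lt_nth_succ (p := (· ∈ B)) (k := j) (Nat.lt_of_succ_le hm') hmB
        omega
      rcases hg m with hm | hstep
      · exact hm.trans (ih (by omega))
      · exact absurd hstep hmB
  refine ⟨e, fun j => hskip j ▸ Nat.nth_mem_of_infinite hB j, ?_⟩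
  have he : {j | s (g (e j)) (g (e (j + 1)))} = e ⁻¹' {n | s (g n) (g (n + 1))} := by
    ext j
    simp [hskip]
  rw [he]
  exact hs.preimage fun n hn => (Nat.range_nth_of_infinite hB).symm ▸ hsr _ _ hn

def ComponentStepAt (r : β → β → Prop) (i : ℕ) (L L' : List β) : Prop :=
  ∃ P b b' Q, P.length = i ∧ L = P ++ b :: Q ∧ L' = P ++ b' :: Q ∧ r b b'

def ComponentStep (r : β → β → Prop) (L L' : List β) : Prop :=
  ∃ i, ComponentStepAt r i L L'

theorem ComponentStep.length_eq {L L' : List β} (h : ComponentStep r L L') :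
    L'.length = L.length := by
  obtain ⟨-, P, b, b', Q, -, rfl, rfl, -⟩ := h
  simp

theorem ComponentStepAt.lt_length {i : ℕ} {L L' : List β} (h : ComponentStepAt r i L L') :
    i < L.length := by
  obtain ⟨P, b, b', Q, rfl, rfl, rfl, -⟩ := h
  simp

theorem ComponentStepAt.getD {i : ℕ} {L L' : List β} (h : ComponentStepAt r i L L') (d : β) :
    r (L.getD i d) (L'.getD i d) := by
  obtain ⟨P, b, b', Q, rfl, rfl, rfl, h⟩ := h
  simpa [List.getD_append_right] using h

theorem ComponentStep.getD {L L' : List β} (h : ComponentStep r L L') (i : ℕ) (d : β) :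
    L'.getD i d = L.getD i d ∨ r (L.getD i d) (L'.getD i d) := by
  obtain ⟨k, P, b, b', Q, rfl, rfl, rfl, hb⟩ := h
  rcases lt_trichotomy i P.length with hi | rfl | hi
  · left
    simp [List.getElem?_append_left hi]
  · exact .inr (ComponentStepAt.getD ⟨P, b, b', Q, rfl, rfl, rfl, hb⟩ d)
  · obtain ⟨k, rfl⟩ := Nat.exists_eq_add_of_lt hi
    left
    simp [List.getElem?_append_right hi.le, show P.length + k + 1 - P.length = k + 1 by omega]

theorem exists_infinite_componentStepAt {F : ℕ → List β} {k : ℕ} (hF : ∀ n, (F n).length = k)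
    (hs : {n | ComponentStep s (F n) (F (n + 1))}.Infinite) :
    ∃ i < k, {n | ComponentStepAt s i (F n) (F (n + 1))}.Infinite := by
  by_contra! hfin
  refine hs (((Set.finite_Iio k).biUnion fun i hi => hfin i hi).subset ?_)
  rintro n ⟨i, hi⟩
  exact Set.mem_biUnion (hi.lt_length.trans_eq (hF n)) hi

end Sequences

section Typed

variable {α T : Type*} {source target : α → T}

theorem wtStr_iff_isChain {w : List α} :
    WTStr source target w ↔ w.IsChain (fun a b => source a = target b) :=
  Iff.rfl

theorem wtStr_append_iff {u v : List α} :
    WTStr source target (u ++ v) ↔ WTStr source target u ∧ WTStr source target v ∧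
      ∀ s ∈ strSource source u, ∀ t ∈ strTarget target v, s = t := by
  simp [wtStr_iff_isChain, strSource, strTarget, List.isChain_append]

@[simp] theorem strTarget_nil : strTarget target ([] : List α) = none := rfl

@[simp] theorem strSource_nil : strSource source ([] : List α) = none := rfl

theorem strTarget_eq_none_iff {w : List α} : strTarget target w = none ↔ w = [] := by
  simp [strTarget]

theorem strSource_eq_none_iff {w : List α} : strSource source w = none ↔ w = [] := by
  simp [strSource]

theorem strTarget_append (u v : List α) :
    strTarget target (u ++ v) = (strTarget target u).or (strTarget target v) := by
  cases u <;> simp [strTarget]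

theorem strSource_append (u v : List α) :
    strSource source (u ++ v) = (strSource source v).or (strSource source u) := by
  simp [strSource, List.getLast?_append, Option.map_or]

theorem wtStr_replace {l r X Y : List α} (hl : l ≠ []) (hr : WTStr source target r)
    (hε : r = [] → strSource source l = strTarget target l)
    (hne : r ≠ [] → strSource source l = strSource source r ∧
      strTarget target l = strTarget target r)
    (h : WTStr source target (X ++ l ++ Y)) (hXrY : X ++ r ++ Y ≠ []) :
    WTStr source target (X ++ r ++ Y) ∧
      strTarget target (X ++ r ++ Y) = strTarget target (X ++ l ++ Y) ∧
      strSource source (X ++ r ++ Y) = strSource source (X ++ l ++ Y) := by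
  simp only [wtStr_append_iff, strTarget_append, strSource_append] at h ⊢
  rcases eq_or_ne r [] with rfl | hr'
  · obtain ⟨a, ha⟩ := Option.ne_none_iff_exists'.1 (mt strTarget_eq_none_iff.1 hl)
    have hb := (hε rfl).trans ha
    simp only [ha, hb, strTarget_nil, strSource_nil, Option.some_or, Option.or_none] at h ⊢
    obtain ⟨⟨hX, -, hXa⟩, hY, haY⟩ := h
    have hXa : ∀ s ∈ strSource source X, s = a := fun s hs => hXa s hs a rfl
    have haY : ∀ t ∈ strTarget target Y, t = a := fun t ht => (haY a rfl t ht).symm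
    refine ⟨⟨⟨hX, List.isChain_nil, by simp⟩, hY,
      fun s hs t ht => (hXa s hs).trans (haY t ht).symm⟩, ?_, ?_⟩
    · rcases hx : strTarget target X with _ | t
      · have hY' : strTarget target Y ≠ none := by
          rw [Ne, strTarget_eq_none_iff]
          simpa [strTarget_eq_none_iff.1 hx] using hXrY
        obtain ⟨t, ht⟩ := Option.ne_none_iff_exists'.1 hY'
        simp [ht, haY t ht]
      · simp
    · rcases hy : strSource source Y with _ | s
      · have hX' : strSource source X ≠ none := by
          rw [Ne, strSource_eq_none_iff]
          simpa [strSource_eq_none_iff.1 hy] using hXrY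
        obtain ⟨s, hs⟩ := Option.ne_none_iff_exists'.1 hX'
        simp [hs, hXa s hs]
      · simp
  · obtain ⟨hsrc, htgt⟩ := hne hr'
    simp only [← hsrc, ← htgt]
    exact ⟨⟨⟨h.1.1, hr, h.1.2.2⟩, h.2⟩, trivial, trivial⟩

theorem Step.mono {S R : Set (List α × List α)} (hSR : S ⊆ R) {u v : List α} (h : Step S u v) :
    Step R u v := by
  obtain ⟨p, q, l, r, hlr, rfl, rfl⟩ := h
  exact ⟨p, q, l, r, hSR hlr, rfl, rfl⟩

end Typed

section Blocks

variable {α T : Type*} {source target : α → T} [DecidableEq T]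

variable (source target) in
def link (a b : α) : Bool :=
  decide (source a = target b)

variable (source target) in
def blocks (u : List α) : List (List α) :=
  u.splitBy (link source target)

theorem wtStr_iff_isChain_link {w : List α} :
    WTStr source target w ↔ w.IsChain (fun x y => link source target x y) := by
  simp [wtStr_iff_isChain, link]

theorem breaks_link_iff {A B : List α} :
    Breaks (link source target) A B ↔
      ∀ s ∈ strSource source A, ∀ t ∈ strTarget target B, s ≠ t := by
  simp [Breaks, link, strSource, strTarget]

theorem wtStr_of_mem_blocks {u B : List α} (h : B ∈ blocks source target u) :
    WTStr source target B :=
  wtStr_iff_isChain_link.2 (List.isChain_of_mem_splitBy h)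

theorem blocks_step {R : Set (List α × List α)} (hR : WTSRS source target R) {u v : List α}
    (h : Step R u v) :
    ComponentStep (Step R) (blocks source target u) (blocks source target v) ∨
      (blocks source target v).length < (blocks source target u).length := by
  obtain ⟨p, q, l, r, hlr, rfl, rfl⟩ := h
  obtain ⟨hl, hwl, hwr, hε, hne⟩ := hR (l, r) hlr
  obtain ⟨P, X, Y, Q, rfl, rfl, hu⟩ :=
    exists_splitBy_eq_of_isChain hl (wtStr_iff_isChain_link.1 hwl) p q
  simp only [blocks, List.append_assoc] at hu ⊢
  by_cases hXrY : X ++ r ++ Y = []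
  · -- the rule erased a whole block
    right
    obtain ⟨rfl, rfl, rfl⟩ : X = [] ∧ r = [] ∧ Y = [] := by simpa using hXrY
    simp only [List.nil_append, List.append_nil] at hu ⊢
    have hchains : ∀ B ∈ P ++ Q, B.IsChain (fun x y => link source target x y) := by
      intro B hB
      refine List.isChain_of_mem_splitBy (l := P.flatten ++ (l ++ Q.flatten)) ?_
      rw [hu]
      simp only [List.mem_append, List.mem_cons] at hB ⊢
      tauto
    calc _ = ((P ++ Q).flatten.splitBy (link source target)).length := by simp
      _ ≤ (P ++ Q).length := length_splitBy_flatten_le hchains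
      _ < _ := by rw [hu]; simp
  · left
    have hXlY : WTStr source target (X ++ l ++ Y) :=
      wtStr_of_mem_blocks (u := P.flatten ++ (X ++ (l ++ (Y ++ Q.flatten))))
        (by rw [blocks, hu]; simp)
    obtain ⟨hwt, htgt, hsrc⟩ := wtStr_replace hl hwr hε hne hXlY hXrY
    have hv := splitBy_replace (P := P) (B := X ++ l ++ Y) (Q := Q) (by rw [hu]; simp) hXrY
      (wtStr_iff_isChain_link.1 hwt)
      (fun A hA => by rw [breaks_link_iff] at hA ⊢; rwa [htgt])
      (fun C hC => by rw [breaks_link_iff] at hC ⊢; rwa [hsrc])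
    refine ⟨P.length, P, X ++ l ++ Y, X ++ r ++ Y, Q, rfl, by simp [hu], by simpa using hv,
      X, Y, l, r, hlr, rfl, rfl⟩

end Blocks

theorem exists_wtStr_reduction {α T : Type*} {source target : α → T}
    {S R : Set (List α × List α)} (hSR : S ⊆ R)
    (hwtS : WTSRS source target S) (hwtR : WTSRS source target R) {f : ℕ → List α}
    (hf : ∀ n, Step R (f n) (f (n + 1))) (hS : {n | Step S (f n) (f (n + 1))}.Infinite) :
    ∃ g : ℕ → List α, (∀ n, Step R (g n) (g (n + 1))) ∧ (∀ n, WTStr source target (g n)) ∧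
      {n | Step S (g n) (g (n + 1))}.Infinite := by
  classical
  set N := fun n => (blocks source target (f n)).length
  have hN : Antitone N := antitone_nat_of_succ_le fun n =>
    (blocks_step hwtR (hf n)).elim (fun h => h.length_eq.le) le_of_lt
  obtain ⟨n₀, hn₀⟩ := exists_forall_ge_eq_of_antitone hN
  set F := fun n => blocks source target (f (n₀ + n))
  have hF : ∀ n, (F n).length = N n₀ := fun n => hn₀ _ (Nat.le_add_right _ _)
  have hcomp : ∀ {R'}, WTSRS source target R' → ∀ n, Step R' (f (n₀ + n)) (f (n₀ + n + 1)) →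
      ComponentStep (Step R') (F n) (F (n + 1)) := fun hR' n h =>
    (blocks_step hR' h).resolve_right fun hlt => by
      have h₀ := hF n
      have h₁ := hF (n + 1)
      simp only [F, ← Nat.add_assoc] at h₀ h₁
      omega
  obtain ⟨i, hi, hiS⟩ := exists_infinite_componentStepAt hF
    ((infinite_preimage_add hS n₀).mono fun n hn => hcomp hwtS n hn)
  obtain ⟨e, he, heS⟩ := exists_subseq_of_stuttering (r := Step R) (s := Step S)
    (fun _ _ => Step.mono hSR) (g := fun n => (F n).getD i [])
    (fun n => (hcomp hwtR n (hf _)).getD i []) (hiS.mono fun n hn => hn.getD [])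
  refine ⟨fun n => (F (e n)).getD i [], he, fun n => ?_, heS⟩
  have hin : i < (F (e n)).length := (hF _).symm ▸ hi
  refine wtStr_of_mem_blocks (u := f (n₀ + e n)) ?_
  change (F (e n)).getD i [] ∈ F (e n)
  rw [List.getD_eq_getElem _ _ hin]
  exact List.getElem_mem hin

theorem type_introduction_relative_general {α T : Type*} (source target : α → T)
    (S R : Set (List α × List α)) (hSR : S ⊆ R)
    (hwtS : WTSRS source target S) (hwtR : WTSRS source target R) :
    RelTerminating (Step S) (Step R) ↔
      ¬ ∃ f : ℕ → List α, (∀ n : ℕ, Step R (f n) (f (n + 1))) ∧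
          (∀ n : ℕ, WTStr source target (f n)) ∧
          {n : ℕ | Step S (f n) (f (n + 1))}.Infinite :=
  ⟨fun h ⟨f, hf, _, hS⟩ => h ⟨f, hf, hS⟩,
    fun h ⟨_, hf, hS⟩ => h (exists_wtStr_reduction hSR hwtS hwtR hf hS)⟩

/-- type introduction for relative string termination. -/
theorem type_introduction_relative {α T : Type*} [Finite α] (source target : α → T)
    (S R : Set (List α × List α)) (hfin : R.Finite) (hSR : S ⊆ R)
    (hwtS : WTSRS source target S) (hwtR : WTSRS source target R) :
    RelTerminating (Step S) (Step R) ↔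
      ¬ ∃ f : ℕ → List α, (∀ n : ℕ, Step R (f n) (f (n + 1))) ∧
          (∀ n : ℕ, WTStr source target (f n)) ∧
          {n : ℕ | Step S (f n) (f (n + 1))}.Infinite :=
  type_introduction_relative_general source target S R hSR hwtS hwtR

end CycleRewriting
end

section
/- Let R be an SRS over an alphabet Σ and u, v ∈ Σ*. (i) If [u] ∘→_R [v], then there exist u', v' ∈ Σ* such that u ↷* u' →_R v' ↷* v. (ii) If u ↷^k v →_R w for some k ≥ len(R), then there exist v', v'' ∈ Σ* and m < len(R) such that u ↷^m v' →_R v'' ↷* w. -/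
namespace CycleRewriting

section Helpers

variable {α : Type*}

lemma rot_ne_nil {u v : List α} (h : Rot u v) : u ≠ [] := by
  obtain ⟨a, w, rfl, rfl⟩ := h; simp

lemma rot_eq_rotate {u v : List α} (h : Rot u v) : v = u.rotate 1 := by
  obtain ⟨a, w, rfl, rfl⟩ := h; simp [List.rotate_cons_succ]

lemma rot_rotate_one {u : List α} (h : u ≠ []) : Rot u (u.rotate 1) := by
  cases u with
  | nil => simp at h
  | cons a w => exact ⟨a, w, rfl, by simp [List.rotate_cons_succ]⟩

lemma relpow_rotate (k : ℕ) (u : List α) (h : u ≠ []) :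
    RelPow Rot k u (u.rotate k) := by
  induction k generalizing u with
  | zero => simp [RelPow]
  | succ n ih =>
      refine ⟨u.rotate 1, rot_rotate_one h, ?_⟩
      have h1 : u.rotate 1 ≠ [] := by simp [h]
      have := ih (u.rotate 1) h1
      rwa [List.rotate_rotate, (by omega : 1 + n = n + 1)] at this

lemma relpow_eq_rotate {k : ℕ} {u v : List α} (h : RelPow Rot k u v) :
    v = u.rotate k := by
  induction k generalizing u with
  | zero => simpa [RelPow] using h.symm
  | succ n ih =>
      obtain ⟨z, hz, hrest⟩ := h
      rw [ih hrest, rot_eq_rotate hz, List.rotate_rotate, (by omega : 1 + n = n + 1)]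

lemma relpow_to_rtg {beta : Type*} {r : beta → beta → Prop} {k : ℕ} {a b : beta}
    (h : RelPow r k a b) : Relation.ReflTransGen r a b := by
  induction k generalizing a with
  | zero => exact h ▸ .refl
  | succ n ih => obtain ⟨z, hz, hrest⟩ := h; exact .head hz (ih hrest)

lemma rtg_rotate (u : List α) (m : ℕ) :
    Relation.ReflTransGen Rot u (u.rotate m) := by
  by_cases h : u = []
  · subst h; rw [List.rotate_nil]
  · exact relpow_to_rtg (relpow_rotate m u h)

lemma rotate_swap (x y : List α) : (x ++ y).rotate x.length = y ++ x := by
  rw [List.rotate_eq_drop_append_take (by simp)]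
  simp

lemma rtg_swap (x y : List α) : Relation.ReflTransGen Rot (x ++ y) (y ++ x) := by
  have := rtg_rotate (x ++ y) x.length
  rwa [rotate_swap] at this

lemma length_le_lenSRS {R : Set (List α × List α)} (hfin : R.Finite)
    {l r : List α} (h : (l, r) ∈ R) : l.length ≤ lenSRS R :=
  le_csSup ((hfin.image _).bddAbove) ⟨(l, r), h, rfl⟩

end Helpers

/-- (i) a cycle rewrite step can be simulated by shifts and a string
rewrite step; (ii) at most `len R - 1` shift steps before the rewrite step suffice. -/
theorem shift_simulation {α : Type*} [Finite α] (R : Set (List α × List α))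
    (hfin : R.Finite) (hne : ∀ p ∈ R, p.1 ≠ []) :
    (∀ u v : List α, CycleStep R u v →
      ∃ u' v' : List α, Relation.ReflTransGen Rot u u' ∧ Step R u' v' ∧
        Relation.ReflTransGen Rot v' v) ∧
    (∀ (u v w : List α) (k : ℕ), lenSRS R ≤ k → RelPow Rot k u v → Step R v w →
      ∃ (v' v'' : List α) (m : ℕ), m < lenSRS R ∧ RelPow Rot m u v' ∧ Step R v' v'' ∧
        Relation.ReflTransGen Rot v'' w) := by
  constructor
  · rintro u v ⟨l, r, w, hrule, ⟨w₁, w₂, h1, h2⟩, ⟨w₃, w₄, h3, h4⟩⟩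
    refine ⟨l ++ w, r ++ w, ?_, ⟨[], w, l, r, hrule, by simp, by simp⟩, ?_⟩
    · rw [h2, h1]; exact rtg_swap w₂ w₁
    · rw [h3, h4]; exact rtg_swap w₃ w₄
  · rintro u v w k hk hpow ⟨x, y, l, r, hrule, hv, hw⟩
    have hlne : l ≠ [] := hne (l, r) hrule
    have hlL : l.length ≤ lenSRS R := length_le_lenSRS hfin hrule
    have hl1 : 1 ≤ l.length := by
      cases l with
      | nil => exact absurd rfl hlne
      | cons a t => simp
    have hL1 : 1 ≤ lenSRS R := le_trans hl1 hlL
    have hk1 : 1 ≤ k := le_trans hL1 hk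
    have hune : u ≠ [] := by
      cases k with
      | zero => omega
      | succ n => obtain ⟨z, hz, _⟩ := hpow; exact rot_ne_nil hz
    have hveq : v = u.rotate k := relpow_eq_rotate hpow
    have hn : 0 < u.length := List.length_pos_iff.mpr hune
    set k' := k % u.length with hk'def
    have hkn : k' < u.length := Nat.mod_lt _ hn
    have hveq' : v = u.rotate k' := by
      rw [hveq, hk'def, List.rotate_mod]
    have hrot : v = u.drop k' ++ u.take k' := by
      rw [hveq', List.rotate_eq_drop_append_take (le_of_lt hkn)]
    have hu : u = u.take k' ++ u.drop k' := (List.take_append_drop k' u).symm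
    have hdt : u.drop k' ++ u.take k' = x ++ (l ++ y) := by
      rw [← hrot, hv, List.append_assoc]
    set t := u.take k' with htdef
    set d := u.drop k' with hddef
    clear_value t d
    rcases List.append_eq_append_iff.mp hdt with ⟨s, hx, ht⟩ | ⟨s, hd, hly⟩
    · -- redex entirely inside the head `take k' u` of `u`
      refine ⟨u, s ++ r ++ (y ++ d), 0, hL1, rfl,
        ⟨s, y ++ d, l, r, hrule, ?_, rfl⟩, ?_⟩
      · rw [hu, ht]; simp [List.append_assoc]
      · have h1 : s ++ r ++ (y ++ d) = (s ++ r ++ y) ++ d := by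
          simp [List.append_assoc]
        have h2 : w = d ++ (s ++ r ++ y) := by
          rw [hw, hx]; simp [List.append_assoc]
        rw [h1, h2]; exact rtg_swap _ _
    · rcases List.append_eq_append_iff.mp hly with ⟨s₂, hs, hy⟩ | ⟨s₂, hl, ht⟩
      · -- redex entirely inside the tail `drop k' u` of `u`
        refine ⟨u, t ++ x ++ r ++ s₂, 0, hL1, rfl,
          ⟨t ++ x, s₂, l, r, hrule, ?_, by simp [List.append_assoc]⟩, ?_⟩
        · rw [hu, hd, hs]; simp [List.append_assoc]
        · have h1 : t ++ x ++ r ++ s₂ = t ++ (x ++ r ++ s₂) := by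
            simp [List.append_assoc]
          have h2 : w = (x ++ r ++ s₂) ++ t := by
            rw [hw, hy]; simp [List.append_assoc]
          rw [h1, h2]; exact rtg_swap _ _
      · -- redex straddles the boundary: l = s ++ s₂
        by_cases hsnil : s = []
        · subst hsnil
          simp only [List.nil_append] at hl
          simp only [List.append_nil] at hd
          refine ⟨u, r ++ (y ++ x), 0, hL1, rfl,
            ⟨[], y ++ x, l, r, hrule, ?_, by simp⟩, ?_⟩
          · rw [hu, ht, hd, hl]; simp [List.append_assoc]
          · have h2 : w = x ++ (r ++ y) := by rw [hw]; simp [List.append_assoc]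
            have h1 : r ++ (y ++ x) = (r ++ y) ++ x := by simp [List.append_assoc]
            rw [h1, h2]; exact rtg_swap _ _
        · have hs1 : 1 ≤ s.length := by
            cases s with
            | nil => exact absurd rfl hsnil
            | cons a t => simp
          have hm : s₂.length < lenSRS R := by
            have : l.length = s.length + s₂.length := by rw [hl]; simp
            omega
          refine ⟨(y ++ x) ++ l ++ [], (y ++ x) ++ r ++ [], s₂.length, hm, ?_,
            ⟨y ++ x, [], l, r, hrule, rfl, rfl⟩, ?_⟩
          · have hu2 : u = s₂ ++ (y ++ x ++ s) := by
              rw [hu, ht, hd]; simp [List.append_assoc]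
            have h0 := relpow_rotate s₂.length u hune
            have heq : u.rotate s₂.length = (y ++ x) ++ l ++ [] := by
              conv_lhs => rw [hu2]
              rw [rotate_swap, hl]
              simp [List.append_assoc]
            rwa [heq] at h0
          · have h1 : (y ++ x) ++ r ++ [] = y ++ (x ++ r) := by
              simp [List.append_assoc]
            have h2 : w = (x ++ r) ++ y := by rw [hw]
            rw [h1, h2]; exact rtg_swap _ _

end CycleRewriting
end

section
/- Let R be an SRS over Σ. If the cycle rewrite relation ∘→_R is non-terminating, then the composed relation ↷^{<len(R)} ∘ →_R (fewer than len(R) shift steps followed by one →_R step) admits an infinite reduction. -/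
namespace CycleRewriting

lemma rotate_append_len {α : Type*} (a b : List α) : (a ++ b).rotate a.length = b ++ a := by
  rw [List.rotate_eq_drop_append_take (by simp), List.drop_left, List.take_left]

lemma sim_iff {α : Type*} {u v : List α} : Sim u v ↔ u ~r v := by
  constructor
  · rintro ⟨w₁, w₂, rfl, rfl⟩
    exact ⟨w₁.length, rotate_append_len w₁ w₂⟩
  · rintro ⟨n, rfl⟩
    rcases eq_or_ne u [] with rfl | hu
    · exact ⟨[], [], by simp, by simp⟩
    refine ⟨u.take (n % u.length), u.drop (n % u.length), by simp, ?_⟩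
    rw [← List.rotate_mod, List.rotate_eq_drop_append_take
      (Nat.mod_lt _ (List.length_pos_iff.mpr hu)).le]

lemma sim_refl {α : Type*} (u : List α) : Sim u u := sim_iff.mpr (List.IsRotated.refl u)

lemma sim_symm {α : Type*} {u v : List α} (h : Sim u v) : Sim v u :=
  sim_iff.mpr (sim_iff.mp h).symm

lemma sim_trans {α : Type*} {u v w : List α} (h : Sim u v) (h' : Sim v w) : Sim u w :=
  sim_iff.mpr ((sim_iff.mp h).trans (sim_iff.mp h'))

lemma relpow_rot {α : Type*} : ∀ (m : ℕ) (x : List α), x ≠ [] → RelPow Rot m x (x.rotate m)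
  | 0, x, _ => by simp [RelPow]
  | m + 1, x, hx => by
    obtain ⟨a, w, rfl⟩ : ∃ a w, x = a :: w := by
      cases x with
      | nil => exact absurd rfl hx
      | cons a w => exact ⟨a, w, rfl⟩
    refine ⟨w ++ [a], ⟨a, w, rfl, rfl⟩, ?_⟩
    have h1 : (a :: w).rotate (m + 1) = (w ++ [a]).rotate m := by
      rw [List.rotate_cons_succ]
    rw [h1]
    exact relpow_rot m (w ++ [a]) (by simp)

lemma key_step {α : Type*} {R : Set (List α × List α)} {l r w x : List α}
    (hl : l ≠ []) (hlen : l.length ≤ lenSRS R) (hR : (l, r) ∈ R)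
    (hx : Sim (l ++ w) x) :
    ∃ y, Sim (r ++ w) y ∧ Relation.Comp
      (fun u v : List α => ∃ m < lenSRS R, RelPow Rot m u v) (Step R) x y := by
  have hpos : 0 < lenSRS R := lt_of_lt_of_le (List.length_pos_iff.mpr hl) hlen
  obtain ⟨w₁, w₂, h1, h2⟩ := hx
  rcases List.append_eq_append_iff.mp h1 with ⟨t, ht1, ht2⟩ | ⟨t, ht1, ht2⟩
  · -- w₁ = l ++ t, w = t ++ w₂ ;  x = w₂ ++ l ++ t
    subst ht1; subst ht2; subst h2
    refine ⟨w₂ ++ r ++ t, ⟨r ++ t, w₂, by simp, by simp⟩, ?_⟩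
    exact ⟨w₂ ++ (l ++ t), ⟨0, hpos, rfl⟩, ⟨w₂, t, l, r, hR, by simp, by simp⟩⟩
  · -- l = w₁ ++ t, w₂ = t ++ w ;  x = t ++ w ++ w₁
    subst ht1; subst ht2; subst h2
    rcases eq_or_ne w₁ [] with rfl | hw₁
    · refine ⟨r ++ w, sim_refl _, ?_⟩
      refine ⟨(t ++ w) ++ [], ⟨0, hpos, rfl⟩, ⟨[], w, t, r, hR, by simp, by simp⟩⟩
    · refine ⟨w ++ r, ⟨r, w, rfl, rfl⟩, ?_⟩
      refine ⟨w ++ w₁ ++ t, ⟨t.length, ?_, ?_⟩, ⟨w, [], w₁ ++ t, r, hR, by simp, by simp⟩⟩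
      · calc t.length < (w₁ ++ t).length := by
              simp [List.length_append]
              exact List.length_pos_iff.mpr hw₁
          _ ≤ lenSRS R := hlen
      · have : ((t ++ w) ++ w₁).rotate t.length = w ++ w₁ ++ t := by
          have := rotate_append_len t (w ++ w₁)
          simpa [List.append_assoc] using this
        rw [← this]
        apply relpow_rot
        simp [hw₁]

/-- if `∘→_R` is non-terminating, then `↷^{<len R} ∘ →_R` admits an
infinite reduction. -/
theorem shift_nontermination {α : Type*} [Finite α] (R : Set (List α × List α))
    (hfin : R.Finite) (hne : ∀ p ∈ R, p.1 ≠ []) :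
    ¬ Terminating (CycleStep R) →
      ¬ Terminating (Relation.Comp
          (fun u v : List α => ∃ m < lenSRS R, RelPow Rot m u v) (Step R)) := by
  intro hcs
  simp only [Terminating, not_not] at hcs ⊢
  obtain ⟨f, hf⟩ := hcs
  choose l r w hR hsimL hsimR using hf
  have hlen : ∀ n, (l n).length ≤ lenSRS R :=
    fun n => le_csSup (hfin.image _).bddAbove ⟨(l n, r n), hR n, rfl⟩
  have hkey : ∀ n x, Sim (l n ++ w n) x → ∃ y, Sim (l (n + 1) ++ w (n + 1)) y ∧
      Relation.Comp (fun u v : List α => ∃ m < lenSRS R, RelPow Rot m u v) (Step R) x y := by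
    intro n x hx
    obtain ⟨y, hy1, hy2⟩ := key_step (hne _ (hR n)) (hlen n) (hR n) hx
    exact ⟨y, sim_trans (hsimL (n + 1)) (sim_trans (sim_symm (hsimR n)) hy1), hy2⟩
  let g : ∀ n : ℕ, {x : List α // Sim (l n ++ w n) x} := fun n =>
    Nat.rec ⟨l 0 ++ w 0, sim_refl _⟩
      (fun n p => ⟨(hkey n p.1 p.2).choose, (hkey n p.1 p.2).choose_spec.1⟩) n
  refine ⟨fun n => (g n).1, fun n => ?_⟩
  exact (hkey n (g n).1 (g n).2).choose_spec.2

end CycleRewriting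
end

section
/- Let R be an SRS over Σ_A and u, v, w ∈ Σ_A*. If u ↷^{<len(R)} v →_R w, then B u E →_{shift(R)}⁺ B w E (a nonempty sequence of →_{shift(R)} steps). -/
namespace CycleRewriting

/-- The alphabet of `shift R`: the original alphabet `Σ_A`, two fresh copies `Σ_B`,
`Σ_C`, and the fresh symbols `B`, `E`, `W`, `V`, `M`, `L`, `R`, `D`. -/
inductive ShiftSym (α : Type*) where
  | ca : α → ShiftSym α          -- Σ_A
  | cb : α → ShiftSym α          -- Σ_B
  | cc : α → ShiftSym α          -- Σ_C
  | symB : ShiftSym α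
  | symE : ShiftSym α
  | symW : ShiftSym α
  | symV : ShiftSym α
  | symM : ShiftSym α
  | symL : ShiftSym α
  | symR : ShiftSym α
  | symD : ShiftSym α

open ShiftSym in
/-- The transformation `shift`, with `N = max (0, lenSRS R - 1)`. -/
noncomputable def shiftSRS {α : Type*} (R : Set (List α × List α)) :
    Set (List (ShiftSym α) × List (ShiftSym α)) :=
  { p | p = ([symB], symW :: List.replicate (lenSRS R - 1) symM ++ [symV]) ∨  -- shiftA
        p = ([symM], []) ∨                                                    -- shiftB
        (∃ a : α, p = ([symM, symV, ca a], [symV, cb a])) ∨                   -- shiftC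
        (∃ a b : α, p = ([cb b, ca a], [ca a, cb b])) ∨                       -- shiftD
        (∃ b : α, p = ([cb b, symE], [ca b, symE])) ∨                         -- shiftE
        p = ([symW, symV], [symR, symL]) ∨                                    -- shiftF
        (∃ a : α, p = ([symL, ca a], [cc a, symL])) ∨                         -- shiftG
        (∃ l r, (l, r) ∈ R ∧ p = (symL :: l.map ca, symD :: r.map ca)) ∨      -- shiftH
        (∃ c : α, p = ([cc c, symD], [symD, ca c])) ∨                         -- shiftI
        p = ([symR, symD], [symB]) }                                          -- shiftJ

section Aux

open ShiftSym

variable {α : Type*} {R : Set (List α × List α)}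

lemma rule_step {R : Set (List α × List α)} {l r : List α} (h : (l, r) ∈ R)
    (p q : List α) : Step R (p ++ l ++ q) (p ++ r ++ q) :=
  ⟨p, q, l, r, h, rfl, rfl⟩

open ShiftSym in
lemma memA : (([symB], symW :: List.replicate (lenSRS R - 1) symM ++ [symV]) :
    List (ShiftSym α) × List (ShiftSym α)) ∈ shiftSRS R := Or.inl rfl

lemma memB : (([symM], []) : List (ShiftSym α) × List (ShiftSym α)) ∈ shiftSRS R :=
  Or.inr (Or.inl rfl)

lemma memC (a : α) : (([symM, symV, ca a], [symV, cb a]) :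
    List (ShiftSym α) × List (ShiftSym α)) ∈ shiftSRS R :=
  Or.inr (Or.inr (Or.inl ⟨a, rfl⟩))

lemma memD (a b : α) : (([cb b, ca a], [ca a, cb b]) :
    List (ShiftSym α) × List (ShiftSym α)) ∈ shiftSRS R :=
  Or.inr (Or.inr (Or.inr (Or.inl ⟨a, b, rfl⟩)))

lemma memE (b : α) : (([cb b, symE], [ca b, symE]) :
    List (ShiftSym α) × List (ShiftSym α)) ∈ shiftSRS R :=
  Or.inr (Or.inr (Or.inr (Or.inr (Or.inl ⟨b, rfl⟩))))

lemma memF : (([symW, symV], [symR, symL]) :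
    List (ShiftSym α) × List (ShiftSym α)) ∈ shiftSRS R :=
  Or.inr (Or.inr (Or.inr (Or.inr (Or.inr (Or.inl rfl)))))

lemma memG (a : α) : (([symL, ca a], [cc a, symL]) :
    List (ShiftSym α) × List (ShiftSym α)) ∈ shiftSRS R :=
  Or.inr (Or.inr (Or.inr (Or.inr (Or.inr (Or.inr (Or.inl ⟨a, rfl⟩))))))

lemma memH {l r : List α} (h : (l, r) ∈ R) :
    ((symL :: l.map ca, symD :: r.map ca) :
    List (ShiftSym α) × List (ShiftSym α)) ∈ shiftSRS R :=
  Or.inr (Or.inr (Or.inr (Or.inr (Or.inr (Or.inr (Or.inr (Or.inl ⟨l, r, h, rfl⟩)))))))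

lemma memI (c : α) : (([cc c, symD], [symD, ca c]) :
    List (ShiftSym α) × List (ShiftSym α)) ∈ shiftSRS R :=
  Or.inr (Or.inr (Or.inr (Or.inr (Or.inr (Or.inr (Or.inr (Or.inr (Or.inl ⟨c, rfl⟩))))))))

lemma memJ : (([symR, symD], [symB]) :
    List (ShiftSym α) × List (ShiftSym α)) ∈ shiftSRS R :=
  Or.inr (Or.inr (Or.inr (Or.inr (Or.inr (Or.inr (Or.inr (Or.inr (Or.inr rfl))))))))

lemma delM (p q : List (ShiftSym α)) (k : ℕ) :
    Relation.ReflTransGen (Step (shiftSRS R))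
      (p ++ List.replicate k symM ++ q) (p ++ q) := by
  induction k with
  | zero => simpa using Relation.ReflTransGen.refl
  | succ k ih =>
    refine Relation.ReflTransGen.head ?_ ih
    have := rule_step (memB (R := R) (α := α)) p (List.replicate k symM ++ q)
    simpa [List.replicate_succ] using this

lemma movB (b : α) (u : List α) (p q : List (ShiftSym α)) :
    Relation.ReflTransGen (Step (shiftSRS R))
      (p ++ [cb b] ++ u.map ca ++ q) (p ++ u.map ca ++ [cb b] ++ q) := by
  induction u generalizing p with
  | nil => simpa using Relation.ReflTransGen.refl
  | cons a u ih =>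
    refine Relation.ReflTransGen.head
      (b := p ++ [ca a] ++ [cb b] ++ u.map ca ++ q) ?_ ?_
    · have := rule_step (memD (R := R) a b) p (u.map ca ++ q)
      simpa using this
    · have := ih (p ++ [ca a])
      simpa using this

lemma movL (u : List α) (p q : List (ShiftSym α)) :
    Relation.ReflTransGen (Step (shiftSRS R))
      (p ++ [symL] ++ u.map ca ++ q) (p ++ u.map cc ++ [symL] ++ q) := by
  induction u generalizing p with
  | nil => simpa using Relation.ReflTransGen.refl
  | cons a u ih =>
    refine Relation.ReflTransGen.head
      (b := p ++ [cc a] ++ [symL] ++ u.map ca ++ q) ?_ ?_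
    · have := rule_step (memG (R := R) a) p (u.map ca ++ q)
      simpa using this
    · have := ih (p ++ [cc a])
      simpa using this

lemma movD (u : List α) (p q : List (ShiftSym α)) :
    Relation.ReflTransGen (Step (shiftSRS R))
      (p ++ u.map cc ++ [symD] ++ q) (p ++ [symD] ++ u.map ca ++ q) := by
  induction u generalizing p with
  | nil => simpa using Relation.ReflTransGen.refl
  | cons a u ih =>
    refine Relation.ReflTransGen.trans
      (b := p ++ [cc a] ++ [symD] ++ u.map ca ++ q) ?_ ?_
    · have := ih (p ++ [cc a])
      simpa using this
    · have := rule_step (memI (R := R) a) p (u.map ca ++ q)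
      simpa using Relation.ReflTransGen.single this

lemma rotSim (m : ℕ) (u v : List α) (h : RelPow Rot m u v) :
    Relation.ReflTransGen (Step (shiftSRS R))
      ([symW] ++ List.replicate m symM ++ [symV] ++ u.map ca ++ [symE])
      ([symW, symV] ++ v.map ca ++ [symE]) := by
  induction m generalizing u with
  | zero =>
    have h' : u = v := h
    subst h'
    simpa using Relation.ReflTransGen.refl
  | succ m ih =>
    obtain ⟨x, hux, hxv⟩ := h
    obtain ⟨a, u', rfl, rfl⟩ := hux
    refine Relation.ReflTransGen.head
      (b := [symW] ++ List.replicate m symM ++ [symV, cb a] ++ u'.map ca ++ [symE]) ?_ ?_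
    · have := rule_step (memC (R := R) a) ([symW] ++ List.replicate m symM)
        (u'.map ca ++ [symE])
      simpa [List.replicate_succ' (n := m)] using this
    refine Relation.ReflTransGen.trans
      (b := [symW] ++ List.replicate m symM ++ [symV] ++ u'.map ca ++ [cb a] ++ [symE]) ?_ ?_
    · have := movB (R := R) a u' ([symW] ++ List.replicate m symM ++ [symV]) [symE]
      simpa using this
    refine Relation.ReflTransGen.head
      (b := [symW] ++ List.replicate m symM ++ [symV] ++ (u' ++ [a]).map ca ++ [symE]) ?_ ?_
    · have := rule_step (memE (R := R) a)
        ([symW] ++ List.replicate m symM ++ [symV] ++ u'.map ca) ([] : List (ShiftSym α))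
      simpa using this
    · have := ih (u' ++ [a]) hxv
      simpa using this

end Aux

open ShiftSym in
/-- `shift R` simulates `↷^{<len R} ∘ →_R`. -/
theorem shift_simulates {α : Type*} [Finite α] (R : Set (List α × List α))
    (hfin : R.Finite) (hne : ∀ p ∈ R, p.1 ≠ [])
    (u v w : List α) (hrot : ∃ m < lenSRS R, RelPow Rot m u v) (hstep : Step R v w) :
    Relation.TransGen (Step (shiftSRS R))
      (symB :: u.map ca ++ [symE]) (symB :: w.map ca ++ [symE]) := by
  classical
  obtain ⟨m, hm, hpow⟩ := hrot
  obtain ⟨p, q, l, r, hlr, rfl, rfl⟩ := hstep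
  have hmN : m ≤ lenSRS R - 1 := Nat.le_pred_of_lt hm
  have hrep : List.replicate (lenSRS R - 1) (symM : ShiftSym α)
      = List.replicate m symM ++ List.replicate (lenSRS R - 1 - m) symM := by
    rw [← List.replicate_add, Nat.add_sub_cancel' hmN]
  refine Relation.TransGen.head'
    (b := [symW] ++ List.replicate (lenSRS R - 1) symM ++ [symV] ++ u.map ca ++ [symE]) ?_ ?_
  · have := rule_step (memA (R := R)) ([] : List (ShiftSym α)) (u.map ca ++ [symE])
    simpa using this
  · have h2 : Relation.ReflTransGen (Step (shiftSRS R))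
        ([symW] ++ List.replicate (lenSRS R - 1) symM ++ [symV] ++ u.map ca ++ [symE])
        ([symW] ++ List.replicate m symM ++ [symV] ++ u.map ca ++ [symE]) := by
      have := delM (R := R) ([symW] ++ List.replicate m symM)
        ([symV] ++ u.map ca ++ [symE]) (lenSRS R - 1 - m)
      rw [hrep]; simpa using this
    have h3 := rotSim (R := R) m u (p ++ l ++ q) hpow
    have h4 : Step (shiftSRS R)
        ([symW, symV] ++ (p ++ l ++ q).map ca ++ [symE])
        ([symR, symL] ++ (p ++ l ++ q).map ca ++ [symE]) := by
      have := rule_step (memF (R := R)) ([] : List (ShiftSym α))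
        ((p ++ l ++ q).map ca ++ [symE])
      simpa using this
    have h5 : Relation.ReflTransGen (Step (shiftSRS R))
        ([symR, symL] ++ (p ++ l ++ q).map ca ++ [symE])
        ([symR] ++ p.map cc ++ [symL] ++ l.map ca ++ q.map ca ++ [symE]) := by
      have := movL (R := R) p [symR] (l.map ca ++ q.map ca ++ [symE])
      simpa using this
    have h6 : Step (shiftSRS R)
        ([symR] ++ p.map cc ++ [symL] ++ l.map ca ++ q.map ca ++ [symE])
        ([symR] ++ p.map cc ++ [symD] ++ r.map ca ++ q.map ca ++ [symE]) := by
      have := rule_step (memH hlr) ([symR] ++ p.map cc) (q.map ca ++ [symE])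
      simpa using this
    have h7 : Relation.ReflTransGen (Step (shiftSRS R))
        ([symR] ++ p.map cc ++ [symD] ++ r.map ca ++ q.map ca ++ [symE])
        ([symR] ++ [symD] ++ p.map ca ++ r.map ca ++ q.map ca ++ [symE]) := by
      have := movD (R := R) p [symR] (r.map ca ++ q.map ca ++ [symE])
      simpa using this
    have h8 : Step (shiftSRS R)
        ([symR] ++ [symD] ++ p.map ca ++ r.map ca ++ q.map ca ++ [symE])
        (symB :: (p ++ r ++ q).map ca ++ [symE]) := by
      have := rule_step (memJ (R := R) (α := α)) ([] : List (ShiftSym α))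
        (p.map ca ++ r.map ca ++ q.map ca ++ [symE])
      simpa using this
    exact (((((h2.trans h3).tail h4).trans h5).tail h6).trans h7).tail h8


end CycleRewriting
end
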